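/- For every integer n ≥ 1 and every q ∈ ℍ, the conjugate Fueter operator applied to the monomial q ↦ qⁿ satisfies: D̄(qⁿ) = 2 ( n q^{n−1} + Σ_{k=1}^{n} q^{n−k} q̄^{k−1} ). -/

import Mathlib

/-!
The derivative of `p ↦ pⁿ` at `q` is `v ↦ ∑ᵢ q^(n-1-i) v qⁱ`, so `D̄(pⁿ)` is a sum of terms
`(a - e₁ a e₁ - e₂ a e₂ - e₃ a e₃) qⁱ` with `a = q^(n-1-i)`. As `-eᵢ a eᵢ = eᵢ a eᵢ⁻¹` keeps the
real and `eᵢ`-components of `a` and negates the other two, this bracket is `4 Re a = 2 (a + ā)`.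
Each term is therefore `2 (q^(n-1) + q̄^(n-1-i) qⁱ)`, and since `q` commutes with `q̄` the second
parts reindex to `∑_{k=1}^n q^(n-k) q̄^(k-1)`.
-/

noncomputable section

open scoped Quaternion
open Finset

/-- The imaginary units `e₁, e₂, e₃` of the quaternions `ℍ = ℍ[ℝ]`. -/
def e1 : ℍ[ℝ] := ⟨0, 1, 0, 0⟩
def e2 : ℍ[ℝ] := ⟨0, 0, 1, 0⟩
def e3 : ℍ[ℝ] := ⟨0, 0, 0, 1⟩

/-- The (left) Fueter operator `Df = ∂_{q₀}f + e₁∂_{q₁}f + e₂∂_{q₂}f + e₃∂_{q₃}f`,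
where the partial derivatives are the directional derivatives along `1, e₁, e₂, e₃`. -/
def Dop (f : ℍ[ℝ] → ℍ[ℝ]) (q : ℍ[ℝ]) : ℍ[ℝ] :=
  fderiv ℝ f q 1 + e1 * fderiv ℝ f q e1 + e2 * fderiv ℝ f q e2 + e3 * fderiv ℝ f q e3

/-- The (left) conjugate Fueter operator
`D̄f = ∂_{q₀}f − e₁∂_{q₁}f − e₂∂_{q₂}f − e₃∂_{q₃}f`. -/
def Dbar (f : ℍ[ℝ] → ℍ[ℝ]) (q : ℍ[ℝ]) : ℍ[ℝ] :=
  fderiv ℝ f q 1 - e1 * fderiv ℝ f q e1 - e2 * fderiv ℝ f q e2 - e3 * fderiv ℝ f q e3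

/-- The right Fueter operator `fD = ∂_{q₀}f + (∂_{q₁}f)e₁ + (∂_{q₂}f)e₂ + (∂_{q₃}f)e₃`. -/
def DopR (f : ℍ[ℝ] → ℍ[ℝ]) (q : ℍ[ℝ]) : ℍ[ℝ] :=
  fderiv ℝ f q 1 + fderiv ℝ f q e1 * e1 + fderiv ℝ f q e2 * e2 + fderiv ℝ f q e3 * e3

/-- The right conjugate Fueter operator
`fD̄ = ∂_{q₀}f − (∂_{q₁}f)e₁ − (∂_{q₂}f)e₂ − (∂_{q₃}f)e₃`. -/
def DbarR (f : ℍ[ℝ] → ℍ[ℝ]) (q : ℍ[ℝ]) : ℍ[ℝ] :=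
  fderiv ℝ f q 1 - fderiv ℝ f q e1 * e1 - fderiv ℝ f q e2 * e2 - fderiv ℝ f q e3 * e3

/-- The Laplacian in the four real variables `q₀, q₁, q₂, q₃`. -/
def Lap (f : ℍ[ℝ] → ℍ[ℝ]) (q : ℍ[ℝ]) : ℍ[ℝ] :=
  fderiv ℝ (fun p => fderiv ℝ f p 1) q 1 + fderiv ℝ (fun p => fderiv ℝ f p e1) q e1 +
    fderiv ℝ (fun p => fderiv ℝ f p e2) q e2 + fderiv ℝ (fun p => fderiv ℝ f p e3) q e3

/-- `s ∈ [q]`: membership in the 2-sphere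
`[q] = {p : Re(p) = Re(q), |Im(p)| = |Im(q)|}` of `q`. -/
def inSphereOf (s q : ℍ[ℝ]) : Prop := s.re = q.re ∧ ‖s.im‖ = ‖q.im‖

/-- `Q_{c,s}(q) = s² − 2 Re(q) s + |q|²`. -/
def Qc (s q : ℍ[ℝ]) : ℍ[ℝ] := s ^ 2 - 2 * (q.re : ℍ[ℝ]) * s + ((‖q‖ ^ 2 : ℝ) : ℍ[ℝ])

/-- The left slice hyperholomorphic Cauchy kernel `S_L^{-1}(s,q) = (s − q̄) Q_{c,s}(q)⁻¹`. -/
def SL (s q : ℍ[ℝ]) : ℍ[ℝ] := (s - star q) * (Qc s q)⁻¹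

/-- The right slice hyperholomorphic Cauchy kernel `S_R^{-1}(s,q) = Q_{c,s}(q)⁻¹ (s − q̄)`. -/
def SR (s q : ℍ[ℝ]) : ℍ[ℝ] := (Qc s q)⁻¹ * (s - star q)

/-- The left `F`-kernel `F_L(s,q) = −4 (s − q̄) Q_{c,s}(q)^{-2}`. -/
def FL (s q : ℍ[ℝ]) : ℍ[ℝ] := -4 * (s - star q) * ((Qc s q)⁻¹) ^ 2

/-- The right `F`-kernel `F_R(s,q) = −4 Q_{c,s}(q)^{-2} (s − q̄)`. -/
def FR (s q : ℍ[ℝ]) : ℍ[ℝ] := -4 * ((Qc s q)⁻¹) ^ 2 * (s - star q)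

/-- The Clifford–Appell polynomials
`Q_ℓ(q,q̄) = (2/((ℓ+1)(ℓ+2))) Σ_{j=0}^{ℓ} (ℓ−j+1) q^{ℓ−j} q̄^j`. -/
def QA (ℓ : ℕ) (q : ℍ[ℝ]) : ℍ[ℝ] :=
  ((2 : ℝ) / ((ℓ + 1) * (ℓ + 2))) •
    ∑ j ∈ Finset.range (ℓ + 1), ((ℓ - j + 1 : ℕ) : ℍ[ℝ]) * q ^ (ℓ - j) * (star q) ^ j

theorem fderiv_pow_apply {𝕜 𝔸 : Type*} [NontriviallyNormedField 𝕜] [NormedRing 𝔸]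
    [NormedAlgebra 𝕜 𝔸] (n : ℕ) (x v : 𝔸) :
    fderiv 𝕜 (fun p : 𝔸 => p ^ n) x v = ∑ i ∈ range n, x ^ (n - 1 - i) * v * x ^ i := by
  simp [fderiv_pow_ring', mul_assoc]

theorem self_sub_sandwich_units_eq_two_mul_self_add_star (a : ℍ[ℝ]) :
    a - e1 * a * e1 - e2 * a * e2 - e3 * a * e3 = 2 * (a + star a) := by
  rw [two_mul]
  ext <;> simp [Quaternion.re_mul, Quaternion.imI_mul, Quaternion.imJ_mul, Quaternion.imK_mul]
  all_goals simp [e1, e2, e3]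
  ring

theorem Dbar_pow_eq_sum (n : ℕ) (q : ℍ[ℝ]) :
    Dbar (fun p => p ^ n) q =
      ∑ i ∈ range n, 2 * (q ^ (n - 1 - i) + star q ^ (n - 1 - i)) * q ^ i := by
  simp only [Dbar, fderiv_pow_apply, mul_sum, ← sum_sub_distrib]
  refine sum_congr rfl fun i _ => ?_
  rw [← star_pow, ← self_sub_sandwich_units_eq_two_mul_self_add_star]
  noncomm_ring

theorem sum_Icc_one_eq_sum_range {M : Type*} [AddCommMonoid M] (f : ℕ → ℕ → M) (n : ℕ) :
    ∑ k ∈ Icc 1 n, f (n - k) (k - 1) = ∑ i ∈ range n, f i (n - 1 - i) := by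
  rw [← Ico_add_one_right_eq_Icc, sum_Ico_eq_sum_range, Nat.add_sub_cancel, ← sum_range_reflect]
  refine sum_congr rfl fun i hi => ?_
  have hi : i < n := mem_range.mp hi
  congr 1 <;> omega

theorem Dbar_pow_general (n : ℕ) (q : ℍ[ℝ]) :
    Dbar (fun p => p ^ n) q =
      2 * ((n : ℍ[ℝ]) * q ^ (n - 1)
        + ∑ k ∈ Finset.Icc 1 n, q ^ (n - k) * (star q) ^ (k - 1)) := by
  have hsummand : ∀ i ∈ range n, 2 * (q ^ (n - 1 - i) + star q ^ (n - 1 - i)) * q ^ i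
      = 2 * q ^ (n - 1) + 2 * (q ^ i * star q ^ (n - 1 - i)) := by
    intro i hi
    have hexp : n - 1 - i + i = n - 1 := by grind
    rw [mul_assoc, add_mul, ← pow_add, hexp, mul_add,
      ((star_comm_self (x := q)).pow_pow _ _).eq]
  rw [Dbar_pow_eq_sum, sum_congr rfl hsummand, sum_add_distrib, sum_const, card_range, ← mul_sum,
    sum_Icc_one_eq_sum_range (fun i j => q ^ i * star q ^ j), nsmul_eq_mul, mul_add,
    ← mul_assoc, ← mul_assoc, Nat.cast_comm]

/-- for `n ≥ 1`,
`D̄(qⁿ) = 2 (n q^{n−1} + Σ_{k=1}^{n} q^{n−k} q̄^{k−1})`. -/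
theorem Dbar_pow (n : ℕ) (hn : 1 ≤ n) (q : ℍ[ℝ]) :
    Dbar (fun p => p ^ n) q =
      2 * ((n : ℍ[ℝ]) * q ^ (n - 1)
        + ∑ k ∈ Finset.Icc 1 n, q ^ (n - k) * (star q) ^ (k - 1)) :=
  Dbar_pow_general n q

end
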